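/- There is no quasi-metric space on four points defined by a directed graph whose betweenness is isomorphic to the betweenness of Q(4). That is, for every strongly connected digraph on a four-element vertex set W, with ρ(x,y) the length of a shortest directed path from x to y, the betweenness B(ρ) is not isomorphic to B(Q(4)) = {(p,q,r), (r,p,q), (s,q,p), (q,p,s)}. -/

import Mathlib

/-- A quasi-metric on `V`: nonnegative, vanishing exactly on the diagonal,
and satisfying the (directed) triangle inequality. -/
def IsQuasiMetric {V : Type*} (d : V → V → ℝ) : Prop :=
  (∀ x y, 0 ≤ d x y) ∧ (∀ x y, d x y = 0 ↔ x = y) ∧ (∀ x y z, d x z ≤ d x y + d y z)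

/-- Betweenness: `y` lies between `x` and `z` (all three pairwise distinct). -/
def BtwQM {V : Type*} (d : V → V → ℝ) (x y z : V) : Prop :=
  x ≠ y ∧ y ≠ z ∧ x ≠ z ∧ d x z = d x y + d y z

/-- The line through `x` and `y`. -/
def lineQM {V : Type*} (d : V → V → ℝ) (x y : V) : Set V :=
  {z | d z y = d z x + d x y ∨ d x y = d x z + d z y ∨ d x z = d x y + d y z}

/-- The set of all lines of the space. -/
def linesQM {V : Type*} (d : V → V → ℝ) : Set (Set V) :=
  {ℓ | ∃ x y, x ≠ y ∧ ℓ = lineQM d x y}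

/-- The four points of the space `Q(4)`. -/
inductive P4 : Type
  | p | s | q | r
deriving DecidableEq

open P4

/-- The quasi-metric of the space `Q(4)`. -/
def dQ4 : P4 → P4 → ℝ
  | p, p => 0 | p, s => 1 | p, q => 1 | p, r => 3
  | s, p => 3 | s, s => 0 | s, q => 2 | s, r => 3
  | q, p => 1 | q, s => 2 | q, q => 0 | q, r => 2
  | r, p => 1 | r, s => 1 | r, q => 2 | r, r => 0

/-- The betweenness of `Q(4)`. -/
def BQ4 : Set (P4 × P4 × P4) := {(p, q, r), (r, p, q), (s, q, p), (q, p, s)}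

/-- A directed walk of length `n` from `x` to `y` in the digraph with arc relation `A`. -/
def HasWalk {W : Type*} (A : W → W → Prop) (x y : W) (n : ℕ) : Prop :=
  ∃ f : Fin (n + 1) → W, f 0 = x ∧ f (Fin.last n) = y ∧
    ∀ i : Fin n, A (f i.castSucc) (f i.succ)

/-- The distance in a digraph: the length of a shortest directed walk. -/
noncomputable def digraphDist {W : Type*} (A : W → W → Prop) (x y : W) : ℝ :=
  (sInf {n : ℕ | HasWalk A x y n} : ℕ)

/-!
In a digraph metric, a pair at distance at least two has a point between it: the second vertex
of a shortest walk. In `B(Q(4))` no point lies between `p` and `q`, `q` and `r`, `p` and `s`, or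
`s` and `r`, so in a digraph realising it these four pairs are arcs. The triple `(p, q, r)` then
forces `ρ(p, r) = 2 = ρ(p, s) + ρ(s, r)`, putting `(p, s, r)` into the betweenness, which it is
not.
-/

namespace HasWalk

variable {W : Type*} {A : W → W → Prop} {x y z : W} {m n : ℕ}

theorem zero_iff : HasWalk A x y 0 ↔ x = y := by
  constructor
  · rintro ⟨f, hf0, hfl, -⟩
    exact hf0.symm.trans hfl
  · rintro rfl
    exact ⟨fun _ => x, rfl, rfl, fun i => i.elim0⟩

theorem succ_iff : HasWalk A x z (n + 1) ↔ ∃ y, A x y ∧ HasWalk A y z n := by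
  constructor
  · rintro ⟨f, hf0, hfl, hfA⟩
    refine ⟨f 1, hf0 ▸ hfA 0, Fin.tail f, rfl, hfl, fun i => ?_⟩
    simpa only [Fin.tail, Fin.succ_castSucc] using hfA i.succ
  · rintro ⟨y, hxy, g, hg0, hgl, hgA⟩
    refine ⟨Fin.cons x g, rfl, by rw [← Fin.succ_last, Fin.cons_succ, hgl], fun i => ?_⟩
    cases i using Fin.cases with
    | zero => simpa [hg0] using hxy
    | succ j => simpa only [← Fin.succ_castSucc, Fin.cons_succ] using hgA j

theorem append (h₁ : HasWalk A x y m) (h₂ : HasWalk A y z n) : HasWalk A x z (m + n) := by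
  induction m generalizing x with
  | zero => rwa [zero_iff.mp h₁, Nat.zero_add]
  | succ m ih =>
    obtain ⟨w, hxw, hw⟩ := succ_iff.mp h₁
    rw [Nat.succ_add]
    exact succ_iff.mpr ⟨w, hxw, ih hw⟩

end HasWalk

noncomputable def minWalkLength {W : Type*} (A : W → W → Prop) (x y : W) : ℕ :=
  sInf {n : ℕ | HasWalk A x y n}

section minWalkLength

variable {W : Type*} {A : W → W → Prop} {x y z : W} {n : ℕ}

theorem digraphDist_eq_minWalkLength : digraphDist A x y = minWalkLength A x y := rfl

theorem minWalkLength_le (h : HasWalk A x y n) : minWalkLength A x y ≤ n :=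
  Nat.sInf_le h

theorem minWalkLength_self (x : W) : minWalkLength A x x = 0 :=
  Nat.le_zero.mp (minWalkLength_le (HasWalk.zero_iff.mpr rfl))

variable (hconn : ∀ x y : W, ∃ n : ℕ, HasWalk A x y n)
include hconn

theorem hasWalk_minWalkLength (x y : W) : HasWalk A x y (minWalkLength A x y) :=
  Nat.sInf_mem (hconn x y)

theorem minWalkLength_le_add (x y z : W) :
    minWalkLength A x z ≤ minWalkLength A x y + minWalkLength A y z :=
  minWalkLength_le ((hasWalk_minWalkLength hconn x y).append (hasWalk_minWalkLength hconn y z))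

theorem exists_btwQM_of_two_le_minWalkLength (h : 2 ≤ minWalkLength A x z) :
    ∃ y, BtwQM (digraphDist A) x y z := by
  obtain ⟨k, hk⟩ : ∃ k, minWalkLength A x z = k + 2 := ⟨_, (Nat.sub_add_cancel h).symm⟩
  have hw := hasWalk_minWalkLength hconn x z
  rw [hk, HasWalk.succ_iff] at hw
  obtain ⟨y, hxy, hyz⟩ := hw
  have hxy_le : minWalkLength A x y ≤ 1 :=
    minWalkLength_le (HasWalk.succ_iff.mpr ⟨y, hxy, HasWalk.zero_iff.mpr rfl⟩)
  have hyz_le : minWalkLength A y z ≤ k + 1 := minWalkLength_le hyz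
  have hsum := minWalkLength_le_add hconn x y z
  have hxy_eq : minWalkLength A x y = 1 := by omega
  have hyz_eq : minWalkLength A y z = k + 1 := by omega
  refine ⟨y, ?_, ?_, ?_, ?_⟩
  · rintro rfl; simp [minWalkLength_self] at hxy_eq
  · rintro rfl; simp [minWalkLength_self] at hyz_eq
  · rintro rfl; simp [minWalkLength_self] at hk
  · simp only [digraphDist_eq_minWalkLength, hk, hxy_eq, hyz_eq]
    push_cast
    ring

theorem minWalkLength_eq_one_of_forall_not_btwQM (hxz : x ≠ z)
    (h : ∀ y, ¬ BtwQM (digraphDist A) x y z) : minWalkLength A x z = 1 := by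
  have hne : minWalkLength A x z ≠ 0 := fun h0 =>
    hxz (HasWalk.zero_iff.mp (h0 ▸ hasWalk_minWalkLength hconn x z))
  by_contra hne1
  obtain ⟨y, hy⟩ := exists_btwQM_of_two_le_minWalkLength hconn (x := x) (z := z) (by omega)
  exact h y hy

end minWalkLength

theorem stmt_6_general (W : Type)
    (A : W → W → Prop) (hconn : ∀ x y : W, ∃ n : ℕ, HasWalk A x y n) :
    ¬ ∃ f : P4 ≃ W, ∀ x y z : P4,
        (x, y, z) ∈ BQ4 ↔ BtwQM (digraphDist A) (f x) (f y) (f z) := by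
  rintro ⟨f, hf⟩
  have arc (u w : P4) (huw : u ≠ w) (hno : ∀ v, (u, v, w) ∉ BQ4) :
      digraphDist A (f u) (f w) = 1 := by
    have hno' : ∀ y, ¬ BtwQM (digraphDist A) (f u) y (f w) := fun y hy =>
      hno (f.symm y) ((hf _ _ _).mpr (by rwa [f.apply_symm_apply]))
    rw [digraphDist_eq_minWalkLength,
      minWalkLength_eq_one_of_forall_not_btwQM hconn (f.injective.ne huw) hno', Nat.cast_one]
  have hpq := arc p q (by decide) (by rintro (_ | _ | _ | _) <;> simp [BQ4])
  have hqr := arc q r (by decide) (by rintro (_ | _ | _ | _) <;> simp [BQ4])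
  have hps := arc p s (by decide) (by rintro (_ | _ | _ | _) <;> simp [BQ4])
  have hsr := arc s r (by decide) (by rintro (_ | _ | _ | _) <;> simp [BQ4])
  obtain ⟨-, -, -, hpr⟩ := (hf p q r).mp (by simp [BQ4])
  have hpsr : (p, s, r) ∈ BQ4 := (hf p s r).mpr
    ⟨f.injective.ne (by decide), f.injective.ne (by decide), f.injective.ne (by decide),
      by rw [hpr, hpq, hqr, hps, hsr]⟩
  simp [BQ4] at hpsr

/-- no quasi-metric space on four points defined by a (strongly
connected) directed graph has a betweenness isomorphic to that of `Q(4)`. -/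
theorem stmt_6 (W : Type) [Fintype W] (hW : Fintype.card W = 4)
    (A : W → W → Prop) (hconn : ∀ x y : W, ∃ n : ℕ, HasWalk A x y n) :
    ¬ ∃ f : P4 ≃ W, ∀ x y z : P4,
        (x, y, z) ∈ BQ4 ↔ BtwQM (digraphDist A) (f x) (f y) (f z) :=
  stmt_6_general W A hconn
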